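/- Let G be a reaction network on species X, let ℰ ⊆ X be a set of independently conserved species, each closed in G, and let G' be a network obtained from G by adding, for each E ∈ ℰ, a (possibly empty) subset of the two flow reactions {0→E, E→0}. If for some E ∈ ℰ the outflow E→0 is a reaction of G' but the inflow 0→E is not, then for every choice of reaction rates κ, every nonnegative steady state x ∈ ℝ^m_{≥0} of (G', κ) satisfies x_E = 0; in particular (G', κ) has no positive steady states. -/

import Mathlib

/-- A reaction `y → y'` is a pair of complexes, each a vector of
nonnegative integer coefficients indexed by the species: the source and the target. -/
abbrev Reaction (S : Type) : Type := (S → ℕ) × (S → ℕ)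

section General

variable {S : Type} [Fintype S] [DecidableEq S]

/-- The complex consisting of a single copy of species `s`. -/
def unitC (s : S) : S → ℕ := fun t => if t = s then 1 else 0

/-- The complex `a + b`. -/
def pairC (a b : S) : S → ℕ := fun t => (if t = a then 1 else 0) + (if t = b then 1 else 0)

/-- The mass action right-hand side `f_κ` of a network `R` with rates `κ`. -/
def massAction (R : Finset (Reaction S)) (κ : Reaction S → ℝ) (x : S → ℝ) : S → ℝ :=
  fun s => ∑ r ∈ R, κ r * (∏ t, x t ^ r.1 t) * ((r.2 s : ℝ) - (r.1 s : ℝ))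

/-- The stoichiometric subspace of a network: the span of its reaction vectors. -/
def stoichSubspace (R : Finset (Reaction S)) : Submodule ℝ (S → ℝ) :=
  Submodule.span ℝ ((fun r : Reaction S => fun s => ((r.2 s : ℝ) - (r.1 s : ℝ))) '' ↑R)

/-- A positive steady state of the mass action system `(R, κ)`. -/
def isPosSteadyState (R : Finset (Reaction S)) (κ : Reaction S → ℝ) (x : S → ℝ) : Prop :=
  (∀ s, 0 < x s) ∧ massAction R κ x = 0

/-- A steady state is nondegenerate if the kernel of the Jacobian of the mass action
right-hand side intersects the stoichiometric subspace trivially. -/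
def nondegenerate (R : Finset (Reaction S)) (κ : Reaction S → ℝ) (x : S → ℝ) : Prop :=
  ∀ v ∈ stoichSubspace R, fderiv ℝ (massAction R κ) x v = 0 → v = 0

/-- A network admits nondegenerate multistationarity if for some positive rates there are
two distinct nondegenerate positive steady states in the same stoichiometric
compatibility class. -/
def admitsNondegMultistationarity (R : Finset (Reaction S)) : Prop :=
  ∃ κ : Reaction S → ℝ, (∀ r ∈ R, 0 < κ r) ∧
    ∃ x y : S → ℝ, x ≠ y ∧
      isPosSteadyState R κ x ∧ isPosSteadyState R κ y ∧
      nondegenerate R κ x ∧ nondegenerate R κ y ∧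
      y - x ∈ stoichSubspace R

/-- The inflow reaction `0 → s`. -/
def inflow (s : S) : Reaction S := (fun _ => 0, unitC s)

/-- The outflow reaction `s → 0`. -/
def outflow (s : S) : Reaction S := (unitC s, fun _ => 0)

/-- The open network on `E`: add inflow and outflow reactions for every species of `E`. -/
def openOn (R : Finset (Reaction S)) (E : Finset S) : Finset (Reaction S) :=
  R ∪ E.image inflow ∪ E.image outflow

/-- A conservation law: a vector orthogonal to the stoichiometric subspace. -/
def conservationLaw (R : Finset (Reaction S)) (w : S → ℝ) : Prop :=
  ∀ v ∈ stoichSubspace R, ∑ s, w s * v s = 0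

/-- A set `E` of species is independently conserved in `R` if there are conservation laws
`L e` for `e ∈ E` such that `L e` has a nonzero coordinate at `e` and zero coordinate at
`e` for every other `L e'`, `e' ∈ E`. -/
def IndepConserved (R : Finset (Reaction S)) (E : Finset S) : Prop :=
  ∃ L : S → (S → ℝ), ∀ e ∈ E,
    conservationLaw R (L e) ∧ L e e ≠ 0 ∧ ∀ e' ∈ E, e' ≠ e → L e' e = 0

/-- A species is closed in `R` if neither its inflow nor its outflow is a reaction of `R`. -/
def ClosedIn (R : Finset (Reaction S)) (s : S) : Prop :=
  inflow s ∉ R ∧ outflow s ∉ R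

/-- Projection of a complex onto the coordinates outside `E`. -/
def projC (E : Finset S) (y : S → ℕ) : {s : S // s ∉ E} → ℕ := fun s => y s.val

/-- Projection of a reaction onto the coordinates outside `E`. -/
def projR (E : Finset S) (r : Reaction S) : Reaction {s : S // s ∉ E} :=
  (projC E r.1, projC E r.2)

/-- The projected network `G₋E` on the species outside `E`: project all reactions and
remove self-loops. -/
def projNet (R : Finset (Reaction S)) (E : Finset S) : Finset (Reaction {s : S // s ∉ E}) :=
  (R.image (projR E)).filter fun r => r.1 ≠ r.2

/-- Inclusion of a reaction on the species of `E` into a reaction on all of `S`. -/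
def inclR (E : Finset S) (r : Reaction {s : S // s ∈ E}) : Reaction S :=
  (fun s => if h : s ∈ E then r.1 ⟨s, h⟩ else 0,
   fun s => if h : s ∈ E then r.2 ⟨s, h⟩ else 0)

/-- `R` has at most `l` positive steady states in each stoichiometric compatibility class,
for every choice of positive reaction rates: there is no injective family of `l + 1`
positive steady states lying pairwise in the same compatibility class. -/
def atMostPosSS (R : Finset (Reaction S)) (l : ℕ) : Prop :=
  ∀ κ : Reaction S → ℝ, (∀ r ∈ R, 0 < κ r) →
    ∀ f : Fin (l + 1) → (S → ℝ),
      (∀ j, isPosSteadyState R κ (f j)) →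
      (∀ j k, f k - f j ∈ stoichSubspace R) →
      ¬ Function.Injective f

/-- Monostationarity: at most one positive steady state in each stoichiometric
compatibility class, for every choice of positive rates. -/
def monostationary (R : Finset (Reaction S)) : Prop :=
  atMostPosSS R 1

end General

/-- Species of the sequential `n`-site phosphorylation–dephosphorylation cycle:
the enzymes `E`, `F`, the substrates `S i` for `i = 0, …, n`, and the intermediates
`ES i` for `i = 0, …, n-1` and `FS i` (denoting `FS_{i+1}`) for `i = 0, …, n-1`. -/
inductive PS (n : ℕ) : Type
  | E : PS n
  | F : PS n
  | S : Fin (n + 1) → PS n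
  | ES : Fin n → PS n
  | FS : Fin n → PS n
deriving DecidableEq, Fintype

/-- The sequential `n`-site phosphorylation–dephosphorylation cycle `𝒫ⁿ`, with the `6n`
reactions `S_i + E ⇌ ES_i`, `ES_i → S_{i+1} + E` for `i = 0, …, n-1` and
`S_i + F ⇌ FS_i`, `FS_i → S_{i-1} + F` for `i = 1, …, n`. -/
def Pcycle (n : ℕ) : Finset (Reaction (PS n)) :=
  (Finset.univ.image fun i : Fin n => (pairC (PS.S i.castSucc) PS.E, unitC (PS.ES i))) ∪
  (Finset.univ.image fun i : Fin n => (unitC (PS.ES i), pairC (PS.S i.castSucc) PS.E)) ∪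
  (Finset.univ.image fun i : Fin n => (unitC (PS.ES i), pairC (PS.S i.succ) PS.E)) ∪
  (Finset.univ.image fun i : Fin n => (pairC (PS.S i.succ) PS.F, unitC (PS.FS i))) ∪
  (Finset.univ.image fun i : Fin n => (unitC (PS.FS i), pairC (PS.S i.succ) PS.F)) ∪
  (Finset.univ.image fun i : Fin n => (unitC (PS.FS i), pairC (PS.S i.castSucc) PS.F))

/-- Let `E` be a set of independently conserved species, each closed in
`G`, and let `G'` add, for each species of `E`, a (possibly empty) subset of its two flow
reactions. If for some `e ∈ E` the outflow `e → 0` is a reaction of `G'` but the inflow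
`0 → e` is not, then for every choice of positive rates, every nonnegative steady state
`x` of `G'` satisfies `x_e = 0`; in particular `G'` has no positive steady states. -/
theorem partial_open_outflow_boundary {S : Type} [Fintype S] [DecidableEq S]
    (R : Finset (Reaction S)) (E : Finset S)
    (hIC : IndepConserved R E) (hCl : ∀ e ∈ E, ClosedIn R e)
    (A B : Finset S) (hA : A ⊆ E) (hB : B ⊆ E)
    (e : S) (he : e ∈ E)
    (hout : outflow e ∈ R ∪ A.image inflow ∪ B.image outflow)
    (hin : inflow e ∉ R ∪ A.image inflow ∪ B.image outflow)
    (κ : Reaction S → ℝ)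
    (hκ : ∀ r ∈ R ∪ A.image inflow ∪ B.image outflow, 0 < κ r) :
    (∀ x : S → ℝ, (∀ s, 0 ≤ x s) →
        massAction (R ∪ A.image inflow ∪ B.image outflow) κ x = 0 → x e = 0) ∧
    ¬ ∃ x : S → ℝ, isPosSteadyState (R ∪ A.image inflow ∪ B.image outflow) κ x := by

  classical
  obtain ⟨L, hL⟩ := hIC
  set G' : Finset (Reaction S) := R ∪ A.image inflow ∪ B.image outflow with hG'
  set w : S → ℝ := L e with hw
  have hwz : ∀ a ∈ E, a ≠ e → w a = 0 := fun a ha hne => (hL a ha).2.2 e he hne.symm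
  have hwe : w e ≠ 0 := (hL e he).2.1
  have hcons : conservationLaw R w := (hL e he).1
  have heA : e ∉ A := by
    intro heA
    exact hin (Finset.mem_union_left _ (Finset.mem_union_right _
      (Finset.mem_image.mpr ⟨e, heA, rfl⟩)))
  have key : ∀ x : S → ℝ, massAction G' κ x = 0 → x e = 0 := by
    intro x hx
    have hsum0 : ∑ s, w s * massAction G' κ x s = 0 := by
      simp [hx]
    have hswap : (∑ r ∈ G', κ r * (∏ t, x t ^ r.1 t) *
        ∑ s, w s * ((r.2 s : ℝ) - (r.1 s : ℝ))) = ∑ s, w s * massAction G' κ x s := by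
      calc (∑ r ∈ G', κ r * (∏ t, x t ^ r.1 t) * ∑ s, w s * ((r.2 s : ℝ) - (r.1 s : ℝ)))
          = ∑ r ∈ G', ∑ s, w s * (κ r * (∏ t, x t ^ r.1 t) * ((r.2 s : ℝ) - (r.1 s : ℝ))) := by
            refine Finset.sum_congr rfl fun r _ => ?_
            rw [Finset.mul_sum]
            exact Finset.sum_congr rfl fun s _ => by ring
        _ = ∑ s, ∑ r ∈ G', w s * (κ r * (∏ t, x t ^ r.1 t) * ((r.2 s : ℝ) - (r.1 s : ℝ))) :=
            Finset.sum_comm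
        _ = ∑ s, w s * massAction G' κ x s := by
            refine Finset.sum_congr rfl fun s _ => ?_
            rw [massAction, Finset.mul_sum]
    have hsum : (∑ r ∈ G', κ r * (∏ t, x t ^ r.1 t) *
        ∑ s, w s * ((r.2 s : ℝ) - (r.1 s : ℝ))) = 0 := hswap.trans hsum0
    have hsingle : (∑ r ∈ G', κ r * (∏ t, x t ^ r.1 t) *
        ∑ s, w s * ((r.2 s : ℝ) - (r.1 s : ℝ)))
        = κ (outflow e) * (∏ t, x t ^ (outflow e).1 t) *
          ∑ s, w s * (((outflow e).2 s : ℝ) - ((outflow e).1 s : ℝ)) := by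
      refine Finset.sum_eq_single_of_mem _ hout ?_
      intro r hr hne
      rcases Finset.mem_union.mp hr with hr' | hrB
      · rcases Finset.mem_union.mp hr' with hrR | hrA
        · have hv : (fun s => ((r.2 s : ℝ) - (r.1 s : ℝ))) ∈ stoichSubspace R :=
            Submodule.subset_span ⟨r, hrR, rfl⟩
          have := hcons _ hv
          rw [this, mul_zero]
        · obtain ⟨a, haA, rfl⟩ := Finset.mem_image.mp hrA
          have hane : a ≠ e := fun h => heA (h ▸ haA)
          have : (∑ s, w s * (((inflow a).2 s : ℝ) - ((inflow a).1 s : ℝ))) = w a := by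
            simp [inflow, unitC, mul_ite]
          rw [this, hwz a (hA haA) hane, mul_zero]
      · obtain ⟨b, hbB, rfl⟩ := Finset.mem_image.mp hrB
        have hbne : b ≠ e := fun h => hne (by rw [h])
        have : (∑ s, w s * (((outflow b).2 s : ℝ) - ((outflow b).1 s : ℝ))) = -(w b) := by
          simp [outflow, unitC, mul_ite]
        rw [this, hwz b (hB hbB) hbne, neg_zero, mul_zero]
    have hprod : (∏ t, x t ^ (outflow e).1 t) = x e := by
      rw [show (outflow e).1 = unitC e from rfl]
      rw [Finset.prod_eq_single e (fun t _ ht => by simp [unitC, ht]) (by simp)]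
      simp [unitC]
    have hlin : (∑ s, w s * (((outflow e).2 s : ℝ) - ((outflow e).1 s : ℝ))) = -(w e) := by
      simp [outflow, unitC, mul_ite]
    rw [hsingle, hprod, hlin] at hsum
    have hκe : κ (outflow e) ≠ 0 := (hκ _ hout).ne'
    have h2 : κ (outflow e) * (x e * w e) = 0 := by
      rw [← neg_eq_zero, ← hsum]; ring
    have : x e * w e = 0 := by
      rcases mul_eq_zero.mp h2 with h | h
      · exact absurd h hκe
      · exact h
    rcases mul_eq_zero.mp this with h | h
    · exact h
    · exact absurd h hwe
  constructor
  · intro x _ hx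
    exact key x hx
  · rintro ⟨x, hpos, hss⟩
    exact (hpos e).ne' (key x hss)
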